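/- For all a ≥ 0, x, y ∈ ℝ and b ∈ ℤ, the boundary Fourier kernel K satisfies: (1) K(0, x, y, b) = 1 if b = 0 and 0 otherwise; (2) K(a, x, −y, b) = conj(K(a, x, y, b)), where conj denotes complex conjugation; (3) K(a, −x, y, −b) = K(a, x, y, b); (4) K(a, x, −y, −b) = (−1)^b K(a, x, y, b). -/
import Mathlib


open Complex

/-- The alternate Vandermonde convolution `F_{ℓ₁,ℓ₂}(k)`. -/
def altVandermonde (ℓ₁ ℓ₂ : ℕ) (k : ℤ) : ℤ :=
  ∑ l₁ ∈ Finset.range (ℓ₁ + 1), ∑ l₂ ∈ Finset.range (ℓ₂ + 1),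
    (-1) ^ (ℓ₂ - l₂) * (ℓ₁.choose l₁ : ℤ) * (ℓ₂.choose l₂ : ℤ) *
      (if 2 * ((l₁ : ℤ) + l₂) = k + ℓ₁ + ℓ₂ then 1 else 0)

/-- The boundary Fourier kernel
`K(a,x,y,b) = ∑_{ℓ₁,ℓ₂} (a/4)^{(ℓ₁+ℓ₂)/2} F_{ℓ₁,ℓ₂}(b) (iy)^{ℓ₁} x^{ℓ₂}/(ℓ₁! ℓ₂!)`. -/
noncomputable def boundaryKernel (a x y : ℝ) (b : ℤ) : ℂ :=
  ∑' ℓ : ℕ × ℕ,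
    (((a / 4) ^ (((ℓ.1 : ℝ) + ℓ.2) / 2) : ℝ) : ℂ) * (altVandermonde ℓ.1 ℓ.2 b : ℂ) *
      (I * y) ^ ℓ.1 * (x : ℂ) ^ ℓ.2 / ((ℓ.1.factorial : ℂ) * ℓ.2.factorial)

lemma altVandermonde_neg (ℓ₁ ℓ₂ : ℕ) (b : ℤ) :
    altVandermonde ℓ₁ ℓ₂ (-b) = (-1) ^ ℓ₂ * altVandermonde ℓ₁ ℓ₂ b := by
  unfold altVandermonde
  rw [Finset.mul_sum, ← Finset.sum_range_reflect]
  refine Finset.sum_congr rfl fun l₁ hl₁ => ?_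
  rw [Finset.mul_sum, ← Finset.sum_range_reflect]
  refine Finset.sum_congr rfl fun l₂ hl₂ => ?_
  have h₁ : l₁ ≤ ℓ₁ := by
    have := Finset.mem_range.mp hl₁; omega
  have h₂ : l₂ ≤ ℓ₂ := by
    have := Finset.mem_range.mp hl₂; omega
  have e₁ : ℓ₁ + 1 - 1 - l₁ = ℓ₁ - l₁ := by omega
  have e₂ : ℓ₂ + 1 - 1 - l₂ = ℓ₂ - l₂ := by omega
  rw [e₁, e₂]
  have c₁ : ℓ₁.choose (ℓ₁ - l₁) = ℓ₁.choose l₁ := Nat.choose_symm h₁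
  have c₂ : ℓ₂.choose (ℓ₂ - l₂) = ℓ₂.choose l₂ := Nat.choose_symm h₂
  have e₃ : ℓ₂ - (ℓ₂ - l₂) = l₂ := by omega
  rw [c₁, c₂, e₃]
  have hiff : (2 * (((ℓ₁ - l₁ : ℕ) : ℤ) + ((ℓ₂ - l₂ : ℕ) : ℤ)) = -b + ℓ₁ + ℓ₂)
      ↔ (2 * ((l₁ : ℤ) + l₂) = b + ℓ₁ + ℓ₂) := by
    push_cast [h₁, h₂]
    omega
  have hsign : (-1 : ℤ) ^ l₂ = (-1) ^ ℓ₂ * (-1) ^ (ℓ₂ - l₂) := by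
    rw [← pow_add, neg_one_pow_eq_pow_mod_two (n := l₂),
      neg_one_pow_eq_pow_mod_two (n := ℓ₂ + (ℓ₂ - l₂))]
    congr 1
    omega
  by_cases h : 2 * ((l₁ : ℤ) + l₂) = b + ℓ₁ + ℓ₂
  · rw [if_pos (hiff.mpr h), if_pos h, hsign]; ring
  · rw [if_neg (fun hc => h (hiff.mp hc)), if_neg h]; ring

lemma altVandermonde_eq_zero (ℓ₁ ℓ₂ : ℕ) (b : ℤ) (h : ¬ (2 ∣ (b + ℓ₁ + ℓ₂))) :
    altVandermonde ℓ₁ ℓ₂ b = 0 := by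
  unfold altVandermonde
  refine Finset.sum_eq_zero fun l₁ _ => Finset.sum_eq_zero fun l₂ _ => ?_
  rw [if_neg, mul_zero]
  intro hc
  exact h ⟨(l₁ : ℤ) + l₂, hc.symm⟩

lemma neg_one_zpow_of_parity (ℓ₁ ℓ₂ : ℕ) (b : ℤ) (h : 2 ∣ (b + ℓ₁ + ℓ₂)) :
    (-1 : ℂ) ^ b = (-1 : ℂ) ^ (ℓ₁ + ℓ₂) := by
  obtain ⟨m, hm⟩ := h
  have hb : b = 2 * m - ((ℓ₁ : ℤ) + ℓ₂) := by omega
  have hne : (-1 : ℂ) ≠ 0 := by norm_num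
  rw [hb, sub_eq_add_neg, zpow_add₀ hne, zpow_mul, zpow_neg]
  have h1 : ((-1 : ℂ) ^ (2 : ℤ)) = 1 := by norm_num
  rw [h1, one_zpow, one_mul]
  have : ((ℓ₁ : ℤ) + ℓ₂) = ((ℓ₁ + ℓ₂ : ℕ) : ℤ) := by push_cast; ring
  rw [this, zpow_natCast]
  refine inv_eq_of_mul_eq_one_right ?_
  rw [← pow_add, neg_one_pow_eq_pow_mod_two]
  have : (ℓ₁ + ℓ₂ + (ℓ₁ + ℓ₂)) % 2 = 0 := by omega
  rw [this, pow_zero]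

/-- Symmetry identities (1)–(4) for the boundary Fourier kernel `K`. -/
theorem boundaryKernel_symmetries (a : ℝ) (ha : 0 ≤ a) (x y : ℝ) (b : ℤ) :
    (boundaryKernel 0 x y b = if b = 0 then 1 else 0) ∧
    (boundaryKernel a x (-y) b = (starRingEnd ℂ) (boundaryKernel a x y b)) ∧
    (boundaryKernel a (-x) y (-b) = boundaryKernel a x y b) ∧
    (boundaryKernel a x (-y) (-b) = (-1 : ℂ) ^ b * boundaryKernel a x y b) := by
  refine ⟨?_, ?_, ?_, ?_⟩
  · -- (1)
    unfold boundaryKernel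
    rw [tsum_eq_single (⟨0, 0⟩ : ℕ × ℕ)]
    · simp only [Nat.cast_zero, zero_add, Nat.factorial_zero, Nat.cast_one, mul_one, pow_zero]
      rw [zero_div, zero_div, Real.rpow_zero]
      have : altVandermonde 0 0 b = if b = 0 then 1 else 0 := by
        unfold altVandermonde
        simp only [Finset.range_one, Finset.sum_singleton, Nat.choose_self, pow_zero,
          Nat.cast_zero, Nat.cast_one]
        by_cases hb : b = 0 <;> simp [hb, eq_comm]
      rw [this]
      by_cases hb : b = 0 <;> simp [hb]
    · intro ℓ hℓ
      have hpos : 0 < ℓ.1 + ℓ.2 := by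
        rcases ℓ with ⟨ℓ₁, ℓ₂⟩
        by_contra hc
        push_neg at hc
        exact hℓ (by simp at hc ⊢; omega)
      have hgt : (0 : ℝ) < ((ℓ.1 : ℝ) + ℓ.2) / 2 := by
        have : (0 : ℝ) < (ℓ.1 : ℝ) + ℓ.2 := by exact_mod_cast hpos
        linarith
      have : ((0 : ℝ) / 4) ^ (((ℓ.1 : ℝ) + ℓ.2) / 2) = 0 := by
        rw [zero_div, Real.zero_rpow (ne_of_gt hgt)]
      rw [this]
      simp
  · -- (2)
    unfold boundaryKernel
    rw [starRingEnd_apply, tsum_star]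
    refine tsum_congr fun ℓ => ?_
    rw [← starRingEnd_apply]
    simp only [map_div₀, map_mul, map_pow, Complex.conj_ofReal, map_intCast, map_natCast,
      Complex.conj_I]
    push_cast
    ring
  · -- (3)
    unfold boundaryKernel
    refine tsum_congr fun ℓ => ?_
    rw [altVandermonde_neg]
    push_cast
    ring_nf
    rw [pow_mul, show ((-1 : ℂ) ^ ℓ.2) ^ 2 = 1 by
      rw [← pow_mul, mul_comm, pow_mul, neg_one_sq, one_pow], mul_one]
  · -- (4)
    unfold boundaryKernel
    rw [← tsum_mul_left]
    refine tsum_congr fun ℓ => ?_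
    rcases ℓ with ⟨ℓ₁, ℓ₂⟩
    by_cases h : altVandermonde ℓ₁ ℓ₂ b = 0
    · simp only []
      rw [altVandermonde_neg]
      have h' : altVandermonde ℓ₁ ℓ₂ (-b) = 0 := by rw [altVandermonde_neg, h, mul_zero]
      simp [h, h']
    · have hdvd : 2 ∣ (b + ℓ₁ + ℓ₂) := by
        by_contra hc
        exact h (altVandermonde_eq_zero ℓ₁ ℓ₂ b hc)
      have hsign := neg_one_zpow_of_parity ℓ₁ ℓ₂ b hdvd
      simp only []
      rw [altVandermonde_neg, hsign]
      push_cast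
      ring
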